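/- arXiv:2401.01579 — 7 statements merged into one kernel-verified Lean document; each statement's English description precedes it below -/
import Mathlib

section
/- Let (α, 𝒜, μ) be a σ-finite measure space, let p, p' : α → ℝ be nonnegative measurable probability densities with respect to μ (∫ p dμ = ∫ p' dμ = 1), and let g : α → ℝ be a nonnegative measurable weight. Set L := ∫ g·p dμ and L' := ∫ g·p' dμ and assume 0 < L < ∞ and 0 < L' < ∞. Define the reweighted densities q := g·p/L and q' := g·p'/L'. Assume p > 0 and p' > 0 μ-a.e. on the set {g > 0}, and that the functions q·log(q/q'), q·log(q/p) and q·log(q/p') are μ-integrable. Then ∫ q·log(q/q') dμ + ∫ q·log(q/p) dμ − ∫ q·log(q/p') dμ = log(L'/L); that is, the log-ratio of the weighted masses decomposes as D_KL(q‖q') + D_KL(q‖p) − D_KL(q‖p'). -/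
open MeasureTheory

/-- The KL decomposition `log(L'/L) = D_KL(q‖q') + D_KL(q‖p) − D_KL(q‖p')` for
fitness-reweighted probability densities `q = g·p/L`, `q' = g·p'/L'`. -/
theorem stmt_0 {α : Type*} [MeasurableSpace α] (μ : Measure α) [SigmaFinite μ]
    (p p' g : α → ℝ)
    (hpm : Measurable p) (hp'm : Measurable p') (hgm : Measurable g)
    (hp0 : ∀ x, 0 ≤ p x) (hp'0 : ∀ x, 0 ≤ p' x) (hg0 : ∀ x, 0 ≤ g x)
    (hpint : ∫ x, p x ∂μ = 1) (hp'int : ∫ x, p' x ∂μ = 1)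
    (hgp : Integrable (fun x => g x * p x) μ)
    (hgp' : Integrable (fun x => g x * p' x) μ)
    (L L' : ℝ) (hL : L = ∫ x, g x * p x ∂μ) (hL' : L' = ∫ x, g x * p' x ∂μ)
    (hLpos : 0 < L) (hL'pos : 0 < L')
    (q q' : α → ℝ)
    (hq : q = fun x => g x * p x / L) (hq' : q' = fun x => g x * p' x / L')
    (hpos : ∀ᵐ x ∂μ, 0 < g x → 0 < p x ∧ 0 < p' x)
    (h1 : Integrable (fun x => q x * Real.log (q x / q' x)) μ)
    (h2 : Integrable (fun x => q x * Real.log (q x / p x)) μ)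
    (h3 : Integrable (fun x => q x * Real.log (q x / p' x)) μ) :
    (∫ x, q x * Real.log (q x / q' x) ∂μ) + (∫ x, q x * Real.log (q x / p x) ∂μ)
      - (∫ x, q x * Real.log (q x / p' x) ∂μ) = Real.log (L' / L) := by
  have hLne : L ≠ 0 := ne_of_gt hLpos
  have hL'ne : L' ≠ 0 := ne_of_gt hL'pos
  have hqint : ∫ x, q x ∂μ = 1 := by
    rw [hq]
    simp only [div_eq_mul_inv]
    rw [integral_mul_const, ← hL]
    field_simp
  have h12 : Integrable (fun x => q x * Real.log (q x / q' x)
      + q x * Real.log (q x / p x)) μ := h1.add h2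
  rw [← integral_add h1 h2, ← integral_sub h12 h3]
  have hcongr : (fun x => q x * Real.log (q x / q' x) + q x * Real.log (q x / p x)
      - q x * Real.log (q x / p' x)) =ᵐ[μ] fun x => q x * Real.log (L' / L) := by
    filter_upwards [hpos] with x hx
    rcases eq_or_lt_of_le (hg0 x) with hg | hg
    · have hq0 : q x = 0 := by rw [hq]; simp [← hg]
      simp [hq0]
    · obtain ⟨hpx, hp'x⟩ := hx hg
      have hqx : 0 < q x := by rw [hq]; positivity
      have hq'x : 0 < q' x := by rw [hq']; positivity
      have e1 : Real.log (q x / q' x) = Real.log (q x) - Real.log (q' x) :=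
        Real.log_div (ne_of_gt hqx) (ne_of_gt hq'x)
      have e2 : Real.log (q x / p x) = Real.log (q x) - Real.log (p x) :=
        Real.log_div (ne_of_gt hqx) (ne_of_gt hpx)
      have e3 : Real.log (q x / p' x) = Real.log (q x) - Real.log (p' x) :=
        Real.log_div (ne_of_gt hqx) (ne_of_gt hp'x)
      have eq : Real.log (q x) = Real.log (g x) + Real.log (p x) - Real.log L := by
        rw [hq]
        rw [Real.log_div (by positivity) hLne, Real.log_mul (ne_of_gt hg) (ne_of_gt hpx)]
      have eq' : Real.log (q' x) = Real.log (g x) + Real.log (p' x) - Real.log L' := by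
        rw [hq']
        rw [Real.log_div (by positivity) hL'ne, Real.log_mul (ne_of_gt hg) (ne_of_gt hp'x)]
      have elog : Real.log (L' / L) = Real.log L' - Real.log L :=
        Real.log_div hL'ne hLne
      rw [e1, e2, e3, eq, eq', elog]
      ring
  rw [integral_congr_ae hcongr, integral_mul_const, hqint, one_mul]
end

section
/- Let E be a real normed vector space, let (α, 𝒜, μ) be a σ-finite measure space, and for each θ ∈ E let p_θ : α → ℝ be a nonnegative measurable probability density with respect to μ. Let g : α → ℝ be a nonnegative measurable weight, set L(θ) := ∫ g·p_θ dμ, assume 0 < L(θ) < ∞ for θ in a neighborhood U of a point θ⁰, and let q_θ := g·p_θ/L(θ); write q := q_{θ⁰}. Define ℓ(θ) := log L(θ), D(θ) := ∫ q·log(q/p_θ) dμ and K(θ) := ∫ q·log(q/q_θ) dμ. Assume: these integrals are finite on U; K(θ) ≥ 0 on U with K(θ⁰) = 0; the decomposition ℓ(θ) − ℓ(θ⁰) = K(θ) + D(θ⁰) − D(θ) holds on U; ℓ, D, K are differentiable on U; and the map θ ↦ fderiv K θ is differentiable at θ⁰. Then there exist a constant c ≥ 0 and a neighborhood V ⊆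 U of θ⁰ such that for all θ ∈ V, ‖fderiv ℓ θ + fderiv D θ‖ ≤ c·‖θ − θ⁰‖; that is, ∇ log L(θ) = −∇ D_KL(q_{θ⁰}‖p_θ) + O(θ − θ⁰). -/
open MeasureTheory

/-- Proposition 1, quantitative part: `∇ log L(θ) = −∇ D_KL(q_{θ⁰}‖p_θ) + O(θ − θ⁰)`. -/
theorem stmt_2 {E : Type*} [NormedAddCommGroup E] [NormedSpace ℝ E]
    {α : Type*} [MeasurableSpace α] (μ : Measure α) [SigmaFinite μ]
    (p : E → α → ℝ) (g : α → ℝ)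
    (hpm : ∀ θ, Measurable (p θ)) (hgm : Measurable g)
    (hp0 : ∀ θ x, 0 ≤ p θ x) (hg0 : ∀ x, 0 ≤ g x)
    (hpint : ∀ θ, ∫ x, p θ x ∂μ = 1)
    (L : E → ℝ) (hLdef : ∀ θ, L θ = ∫ x, g x * p θ x ∂μ)
    (θ0 : E) (U : Set E) (hU : U ∈ nhds θ0)
    (hLpos : ∀ θ ∈ U, 0 < L θ)
    (hLfin : ∀ θ ∈ U, Integrable (fun x => g x * p θ x) μ)
    (q : E → α → ℝ) (hqdef : ∀ θ, q θ = fun x => g x * p θ x / L θ)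
    (ℓ D K : E → ℝ)
    (hℓdef : ∀ θ, ℓ θ = Real.log (L θ))
    (hDdef : ∀ θ, D θ = ∫ x, q θ0 x * Real.log (q θ0 x / p θ x) ∂μ)
    (hKdef : ∀ θ, K θ = ∫ x, q θ0 x * Real.log (q θ0 x / q θ x) ∂μ)
    (hDfin : ∀ θ ∈ U, Integrable (fun x => q θ0 x * Real.log (q θ0 x / p θ x)) μ)
    (hKfin : ∀ θ ∈ U, Integrable (fun x => q θ0 x * Real.log (q θ0 x / q θ x)) μ)
    (hKnonneg : ∀ θ ∈ U, 0 ≤ K θ) (hK0 : K θ0 = 0)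
    (hdecomp : ∀ θ ∈ U, ℓ θ - ℓ θ0 = K θ + D θ0 - D θ)
    (hℓdiff : ∀ θ ∈ U, DifferentiableAt ℝ ℓ θ)
    (hDdiff : ∀ θ ∈ U, DifferentiableAt ℝ D θ)
    (hKdiff : ∀ θ ∈ U, DifferentiableAt ℝ K θ)
    (hKdiff2 : DifferentiableAt ℝ (fun θ => fderiv ℝ K θ) θ0) :
    ∃ c : ℝ, 0 ≤ c ∧ ∃ V ∈ nhds θ0, V ⊆ U ∧
      ∀ θ ∈ V, ‖fderiv ℝ ℓ θ + fderiv ℝ D θ‖ ≤ c * ‖θ - θ0‖ := by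

  -- fderiv K θ0 = 0 since K has a local min at θ0
  have hmin : IsLocalMin K θ0 := by
    filter_upwards [hU] with θ hθ
    rw [hK0]; exact hKnonneg θ hθ
  have hK0' : fderiv ℝ K θ0 = 0 := hmin.fderiv_eq_zero
  -- big-O bound from differentiability of fderiv K at θ0
  have hO : (fun θ => fderiv ℝ K θ) =O[nhds θ0] (fun θ => θ - θ0) := by
    have := hKdiff2.isBigO_sub
    simpa [hK0'] using this
  rcases hO.exists_nonneg with ⟨c, hc0, hc⟩
  rw [Asymptotics.isBigOWith_iff] at hc
  rcases Filter.eventually_iff_exists_mem.mp hc with ⟨W, hW, hWc⟩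
  refine ⟨c, hc0, W ∩ interior U, Filter.inter_mem hW (interior_mem_nhds.mpr hU),
    (Set.inter_subset_right).trans interior_subset, ?_⟩
  rintro θ ⟨hθW, hθI⟩
  have hθU : θ ∈ U := interior_subset hθI
  -- ℓ = K - D + (D θ0 + ℓ θ0) eventually near θ
  have heq : ℓ =ᶠ[nhds θ] fun θ' => K θ' - D θ' + (D θ0 + ℓ θ0) := by
    filter_upwards [mem_interior_iff_mem_nhds.mp hθI] with θ' hθ'
    have := hdecomp θ' hθ'
    linarith
  have hfd : fderiv ℝ ℓ θ = fderiv ℝ K θ - fderiv ℝ D θ := by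
    rw [heq.fderiv_eq]
    rw [fderiv_add_const]
    exact fderiv_sub (hKdiff θ hθU) (hDdiff θ hθU)
  rw [hfd]
  have := hWc θ hθW
  simpa using this
end

section
/- Let E be a real normed vector space, (α, 𝒜, μ) a measure space, θ⁰ ∈ E and ε > 0. Let p : E → α → ℝ and g : α → ℝ be such that: (i) g ≥ 0 and p θ x > 0 for all θ in the ball B(θ⁰, ε) and μ-a.e. x; (ii) x ↦ g x · p θ x is μ-integrable for every θ ∈ B(θ⁰, ε); (iii) for μ-a.e. x, the map θ ↦ p θ x has a Fréchet derivative ∂p(θ, x) at every θ ∈ B(θ⁰, ε); (iv) there is a μ-integrable function b with ‖g x · ∂p(θ, x)‖ ≤ b x for all θ ∈ B(θ⁰, ε) and μ-a.e. x; (v) x ↦ g x · ∂p(θ⁰, x) is μ-a.e. strongly measurable. Then the map θ ↦ ∫ g x · p θ x ∂μ is differentiable at θ⁰, and its Fréchet derivative is the continuous linear map v ↦ ∫ g x · p θ⁰ x · (fderiv (θ ↦ log (p θ x)) θ⁰ v) ∂μ. -/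
/-! Differentiating under the integral sign (the bound `b` dominates the derivatives on the ball)
gives the derivative `∫ g • ∂p(θ⁰, ·)`; the score identity `p · ∂(log p) = ∂p`, valid where
`p > 0`, turns it into the stated integral. -/

open MeasureTheory Metric

theorem mul_fderiv_log_apply {E : Type*} [NormedAddCommGroup E] [NormedSpace ℝ E]
    {f : E → ℝ} {f' : E →L[ℝ] ℝ} {θ : E} (hf : HasFDerivAt f f' θ) (hθ : f θ ≠ 0) (v : E) :
    f θ * fderiv ℝ (fun θ => Real.log (f θ)) θ v = f' v := by
  rw [(hf.log hθ).fderiv, smul_apply, smul_eq_mul, ← mul_assoc,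
    mul_inv_cancel₀ hθ, one_mul]

theorem stmt_3_general {E : Type*} [NormedAddCommGroup E] [NormedSpace ℝ E]
    {α : Type*} [MeasurableSpace α] (μ : Measure α)
    (θ0 : E) (ε : ℝ) (hε : 0 < ε)
    (p : E → α → ℝ) (g : α → ℝ) (p' : E → α → (E →L[ℝ] ℝ)) (b : α → ℝ)
    (hppos : ∀ᵐ x ∂μ, ∀ θ ∈ ball θ0 ε, 0 < p θ x)
    (hint : ∀ θ ∈ ball θ0 ε, Integrable (fun x => g x * p θ x) μ)
    (hderiv : ∀ᵐ x ∂μ, ∀ θ ∈ ball θ0 ε, HasFDerivAt (fun θ => p θ x) (p' θ x) θ)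
    (hb : Integrable b μ)
    (hbound : ∀ᵐ x ∂μ, ∀ θ ∈ ball θ0 ε, ‖g x • p' θ x‖ ≤ b x)
    (hmeas : AEStronglyMeasurable (fun x => g x • p' θ0 x) μ) :
    ∃ L : E →L[ℝ] ℝ,
      HasFDerivAt (fun θ => ∫ x, g x * p θ x ∂μ) L θ0 ∧
      ∀ v, L v = ∫ x, g x * p θ0 x * (fderiv ℝ (fun θ => Real.log (p θ x)) θ0 v) ∂μ := by
  have hθ0 : θ0 ∈ ball θ0 ε := mem_ball_self hε
  have hball : ball θ0 ε ∈ nhds θ0 := ball_mem_nhds θ0 hε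
  have hderiv_mul : ∀ᵐ x ∂μ, ∀ θ ∈ ball θ0 ε,
      HasFDerivAt (fun θ => g x * p θ x) (g x • p' θ x) θ := by
    filter_upwards [hderiv] with x hx θ hθ using (hx θ hθ).const_mul (g x)
  have hasFDerivAt_integral := hasFDerivAt_integral_of_dominated_of_fderiv_le hball
    (Filter.eventually_of_mem hball fun θ hθ => (hint θ hθ).aestronglyMeasurable)
    (hint θ0 hθ0) hmeas hbound hb hderiv_mul
  refine ⟨∫ x, g x • p' θ0 x ∂μ, hasFDerivAt_integral, fun v => ?_⟩
  have hint' : Integrable (fun x => g x • p' θ0 x) μ :=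
    hb.mono' hmeas (by filter_upwards [hbound] with x hx using hx θ0 hθ0)
  rw [ContinuousLinearMap.integral_apply hint']
  refine integral_congr_ae ?_
  filter_upwards [hppos, hderiv] with x hpx hdx
  rw [mul_assoc, mul_fderiv_log_apply (hdx θ0 hθ0) (hpx θ0 hθ0).ne']
  rfl

/-- Score-function representation of the gradient of the expected fitness:
`∇_θ ∫ g(x) p_θ(x) dμ = ∫ g(x) (∂ log p_θ(x)/∂θ) p_θ(x) dμ` at `θ = θ⁰`. -/
theorem stmt_3 {E : Type*} [NormedAddCommGroup E] [NormedSpace ℝ E]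
    {α : Type*} [MeasurableSpace α] (μ : Measure α)
    (θ0 : E) (ε : ℝ) (hε : 0 < ε)
    (p : E → α → ℝ) (g : α → ℝ) (p' : E → α → (E →L[ℝ] ℝ)) (b : α → ℝ)
    (hg0 : ∀ x, 0 ≤ g x)
    (hppos : ∀ᵐ x ∂μ, ∀ θ ∈ ball θ0 ε, 0 < p θ x)
    (hint : ∀ θ ∈ ball θ0 ε, Integrable (fun x => g x * p θ x) μ)
    (hderiv : ∀ᵐ x ∂μ, ∀ θ ∈ ball θ0 ε, HasFDerivAt (fun θ => p θ x) (p' θ x) θ)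
    (hb : Integrable b μ)
    (hbound : ∀ᵐ x ∂μ, ∀ θ ∈ ball θ0 ε, ‖g x • p' θ x‖ ≤ b x)
    (hmeas : AEStronglyMeasurable (fun x => g x • p' θ0 x) μ) :
    ∃ L : E →L[ℝ] ℝ,
      HasFDerivAt (fun θ => ∫ x, g x * p θ x ∂μ) L θ0 ∧
      ∀ v, L v = ∫ x, g x * p θ0 x * (fderiv ℝ (fun θ => Real.log (p θ x)) θ0 v) ∂μ :=
  stmt_3_general μ θ0 ε hε p g p' b hppos hint hderiv hb hbound hmeas
end

section
/- Fix n ≥ 1, a point x ∈ EuclideanSpace ℝ (Fin n), and a symmetric positive-definite matrix C : Matrix (Fin n) (Fin n) ℝ. Define the multivariate Gaussian log-density in the mean parameter, ℓ : EuclideanSpace ℝ (Fin n) → ℝ, by ℓ(m) := −(n/2)·log(2π) − (1/2)·log(det C) − (1/2)·⟪x − m, C⁻¹ *ᵥ (x − m)⟫, where ⟪·,·⟫ is the Euclidean inner product and *ᵥ is matrix–vector multiplication. Then for every m, ℓ has gradient C⁻¹ *ᵥ (x − m) at m (i.e., its Fréchet derivative at m is v ↦ ⟪C⁻¹ *ᵥ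 (x − m), v⟫); consequently C *ᵥ (gradient of ℓ at m) = x − m. -/
/-! Since `C⁻¹` is symmetric, the quadratic form `v ↦ ⟪v, C⁻¹ v⟫` has derivative `2 ⟪C⁻¹ v, ·⟫`;
the chain rule through `m ↦ x - m` and the factor `-½` leave the gradient `C⁻¹ (x - m)`,
and `C` undoes `C⁻¹`. -/

open Matrix
open scoped InnerProductSpace

section QuadraticForm

variable {E : Type*} [NormedAddCommGroup E] [InnerProductSpace ℝ E] {T : E →L[ℝ] E}

theorem LinearMap.IsSymmetric.hasFDerivAt_inner_self_apply
    (hT : (T : E →ₗ[ℝ] E).IsSymmetric) (v : E) :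
    HasFDerivAt (fun w => ⟪w, T w⟫_ℝ) ((2 : ℝ) • innerSL ℝ (T v)) v := by
  refine ((hasFDerivAt_id v).inner ℝ T.hasFDerivAt).congr_fderiv ?_
  ext u
  have hsymm : ⟪v, T u⟫_ℝ = ⟪T v, u⟫_ℝ := (hT v u).symm
  simp only [ContinuousLinearMap.comp_apply, ContinuousLinearMap.prod_apply, fderivInnerCLM_apply,
    ContinuousLinearMap.coe_id', id_eq, _root_.smul_apply, innerSL_apply_apply,
    smul_eq_mul, hsymm, real_inner_comm (T v) u]
  ring

variable [CompleteSpace E]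

theorem LinearMap.IsSymmetric.hasGradientAt_const_sub_half_inner_sub_self_apply
    (hT : (T : E →ₗ[ℝ] E).IsSymmetric) (c : ℝ) (x m : E) :
    HasGradientAt (fun m => c - (1 / 2) * ⟪x - m, T (x - m)⟫_ℝ) (T (x - m)) m := by
  rw [hasGradientAt_iff_hasFDerivAt]
  refine ((((hT.hasFDerivAt_inner_self_apply (x - m)).comp m
    ((hasFDerivAt_id m).const_sub x)).const_mul (1 / 2)).const_sub c).congr_fderiv ?_
  ext u
  simp only [_root_.neg_apply, _root_.smul_apply, ContinuousLinearMap.comp_apply,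
    ContinuousLinearMap.coe_id', id_eq, innerSL_apply_apply, InnerProductSpace.toDual_apply_apply,
    inner_neg_right, smul_eq_mul]
  ring

end QuadraticForm

theorem stmt_5_general {n : ℕ} (x : EuclideanSpace ℝ (Fin n))
    (C : Matrix (Fin n) (Fin n) ℝ) (hC : C.PosDef)
    (ℓ : EuclideanSpace ℝ (Fin n) → ℝ)
    (hℓ : ∀ m : EuclideanSpace ℝ (Fin n),
      ℓ m = -((n : ℝ) / 2) * Real.log (2 * Real.pi) - (1 / 2) * Real.log C.det
        - (1 / 2) * (inner ℝ (x - m)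
            ((WithLp.equiv 2 (Fin n → ℝ)).symm (C⁻¹.mulVec (fun i => x i - m i))) : ℝ)) :
    ∀ m : EuclideanSpace ℝ (Fin n),
      HasGradientAt ℓ
        ((WithLp.equiv 2 (Fin n → ℝ)).symm (C⁻¹.mulVec (fun i => x i - m i))) m ∧
      C.mulVec (fun i =>
        ((WithLp.equiv 2 (Fin n → ℝ)).symm (C⁻¹.mulVec (fun i => x i - m i))) i)
        = fun i => x i - m i := by
  intro m
  have hsymm : (toEuclideanLin C⁻¹).IsSymmetric :=
    isSymmetric_toEuclideanLin_iff.mpr hC.isHermitian.inv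
  have hdet : IsUnit C.det := (isUnit_iff_isUnit_det C).mp hC.isUnit
  refine ⟨?_, ?_⟩
  · have hℓ' : ℓ = fun m => -((n : ℝ) / 2) * Real.log (2 * Real.pi) - (1 / 2) * Real.log C.det
        - (1 / 2) * ⟪x - m, toEuclideanCLM (𝕜 := ℝ) C⁻¹ (x - m)⟫_ℝ :=
      funext hℓ
    rw [hℓ']
    exact hsymm.hasGradientAt_const_sub_half_inner_sub_self_apply _ x m
  · change C *ᵥ C⁻¹ *ᵥ (fun i => x i - m i) = _
    rw [mulVec_mulVec, mul_nonsing_inv C hdet, one_mulVec]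

/-- The gradient of the multivariate Gaussian log-density with respect to the
mean parameter is `C⁻¹ *ᵥ (x − m)`, hence `C *ᵥ (gradient)` equals `x − m`. -/
theorem stmt_5 {n : ℕ} (hn : 1 ≤ n) (x : EuclideanSpace ℝ (Fin n))
    (C : Matrix (Fin n) (Fin n) ℝ) (hCsymm : C.IsSymm) (hC : C.PosDef)
    (ℓ : EuclideanSpace ℝ (Fin n) → ℝ)
    (hℓ : ∀ m : EuclideanSpace ℝ (Fin n),
      ℓ m = -((n : ℝ) / 2) * Real.log (2 * Real.pi) - (1 / 2) * Real.log C.det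
        - (1 / 2) * (inner ℝ (x - m)
            ((WithLp.equiv 2 (Fin n → ℝ)).symm (C⁻¹.mulVec (fun i => x i - m i))) : ℝ)) :
    ∀ m : EuclideanSpace ℝ (Fin n),
      HasGradientAt ℓ
        ((WithLp.equiv 2 (Fin n → ℝ)).symm (C⁻¹.mulVec (fun i => x i - m i))) m ∧
      C.mulVec (fun i =>
        ((WithLp.equiv 2 (Fin n → ℝ)).symm (C⁻¹.mulVec (fun i => x i - m i))) i)
        = fun i => x i - m i :=
  stmt_5_general x C hC ℓ hℓ
end

section
/- Let (α, 𝒜, μ) be a measure space and d ≥ 1. For θ ∈ EuclideanSpace ℝ (Fin d), let p θ : α → ℝ be a positive probability density with respect to μ. Define the score s(θ, x) := gradient at θ of the map θ ↦ log (p θ x), and the Fisher information matrix I(θ) : Matrix (Fin d) (Fin d) ℝ by I(θ) i j := ∫ s(θ, x) i · s(θ, x) j · p θ x ∂μ. Let θ₀ be a point and let φ, ψ : EuclideanSpace ℝ (Fin d) → EuclideanSpace ℝ (Fin d) satisfy ψ ∘ φ = id on a neighborhood of θ₀ and φ ∘ ψ = id on a neighborhood of η₀ := φ(θ₀); assume φ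 is differentiable at θ₀ with invertible Jacobian matrix J, and ψ is differentiable at η₀. Define the reparameterized family p̃ η := p (ψ η) with Fisher information matrix Ĩ defined analogously. Assume for μ-a.e. x that θ ↦ log (p θ x) is differentiable at θ₀, that all score products appearing in the entries of I(θ₀) and Ĩ(η₀) are integrable against p θ₀ · μ, and that I(θ₀) is invertible. Then for every function F : EuclideanSpace ℝ (Fin d) → ℝ differentiable at θ₀, the natural gradients transform as tangent vectors: Ĩ(η₀)⁻¹ *ᵥ (gradient of F ∘ ψ at η₀) = J *ᵥ (I(θ₀)⁻¹ *ᵥ (gradient of F at θ₀)). -/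
/-!
Write `K` for the Jacobian matrix of `ψ` at `η₀ = φ θ₀`. Differentiating `φ ∘ ψ = id` gives
`J K = 1`, so `K = J⁻¹`. By the chain rule the score of the reparameterized family is `Kᵀ s`,
hence `Ĩ(η₀) = Kᵀ I(θ₀) K` by linearity of the integral, and likewise `∇(F ∘ ψ)(η₀) = Kᵀ ∇F(θ₀)`.
Therefore `Ĩ(η₀)⁻¹ Kᵀ ∇F = K⁻¹ I⁻¹ (Kᵀ)⁻¹ Kᵀ ∇F = J I⁻¹ ∇F`.
-/

open MeasureTheory Matrix

noncomputable def score {α : Type*} {d : ℕ}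
    (p : EuclideanSpace ℝ (Fin d) → α → ℝ) (θ : EuclideanSpace ℝ (Fin d)) (x : α) :
    EuclideanSpace ℝ (Fin d) :=
  gradient (fun θ => Real.log (p θ x)) θ

noncomputable def fisherInfo {α : Type*} [MeasurableSpace α] (μ : Measure α) {d : ℕ}
    (p : EuclideanSpace ℝ (Fin d) → α → ℝ) (θ : EuclideanSpace ℝ (Fin d)) :
    Matrix (Fin d) (Fin d) ℝ :=
  fun i j => ∫ x, score p θ x i * score p θ x j * p θ x ∂μ

open WithLp Filter Topology

section LinearAlgebra

variable {ι : Type*} [Fintype ι]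

theorem exists_mulVec_eq_ofLp_apply [DecidableEq ι]
    (L : EuclideanSpace ℝ ι →L[ℝ] EuclideanSpace ℝ ι) :
    ∃ K : Matrix ι ι ℝ, ∀ v, ofLp (L v) = K *ᵥ ofLp v := by
  refine ⟨(toLpLin 2 2).symm L.toLinearMap, fun v => ?_⟩
  rw [← ofLp_toLp 2 (_ *ᵥ _), ← toLpLin_apply, LinearEquiv.apply_symm_apply]
  rfl

theorem inv_transpose_mul_mul_mulVec_transpose_mulVec {R : Type*} [CommRing R] [DecidableEq ι]
    {J K : Matrix ι ι R} (hJK : J * K = 1) (A : Matrix ι ι R) (g : ι → R) :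
    (Kᵀ * A * K)⁻¹ *ᵥ (Kᵀ *ᵥ g) = J *ᵥ (A⁻¹ *ᵥ g) := by
  have hKJ : K * J = 1 := mul_eq_one_comm.1 hJK
  rw [Matrix.mul_inv_rev, Matrix.mul_inv_rev, inv_eq_right_inv hKJ, ← transpose_nonsing_inv,
    inv_eq_right_inv hKJ, mulVec_mulVec, mulVec_mulVec, mul_assoc, mul_assoc,
    ← transpose_mul, hKJ, transpose_one, mul_one]

theorem integral_mulVec_mul_mulVec_mul {α ι' : Type*} [Fintype ι'] [MeasurableSpace α]
    {μ : Measure α} {s : α → ι → ℝ} {w : α → ℝ}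
    (hint : ∀ k l, Integrable (fun x => s x k * s x l * w x) μ) (A : Matrix ι' ι ℝ) (i j : ι') :
    ∫ x, (A *ᵥ s x) i * (A *ᵥ s x) j * w x ∂μ
      = (A * Matrix.of (fun k l => ∫ x, s x k * s x l * w x ∂μ) * Aᵀ) i j := by
  have hexpand : ∀ x, (A *ᵥ s x) i * (A *ᵥ s x) j * w x
      = ∑ k, ∑ l, A i k * A j l * (s x k * s x l * w x) := fun x => by
    rw [mulVec, mulVec, dotProduct, dotProduct, Finset.sum_mul_sum, Finset.sum_mul]
    refine Finset.sum_congr rfl fun k _ => ?_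
    rw [Finset.sum_mul]
    exact Finset.sum_congr rfl fun l _ => by ring
  simp only [hexpand, mul_apply, transpose_apply, of_apply, Finset.sum_mul]
  rw [integral_finsetSum _ fun k _ => integrable_finsetSum _ fun l _ => (hint k l).const_mul _,
    Finset.sum_comm]
  refine Finset.sum_congr rfl fun k _ => ?_
  rw [integral_finsetSum _ fun l _ => (hint k l).const_mul _]
  refine Finset.sum_congr rfl fun l _ => ?_
  rw [integral_const_mul]
  ring

end LinearAlgebra

section Calculus

variable {ι : Type*} [Fintype ι] {ψ : EuclideanSpace ℝ ι → EuclideanSpace ℝ ι}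
  {η : EuclideanSpace ℝ ι}

theorem mul_eq_one_of_comp_eventuallyEq_id [DecidableEq ι]
    {φ : EuclideanSpace ℝ ι → EuclideanSpace ℝ ι} (hφψ : ∀ᶠ y in 𝓝 η, φ (ψ y) = y)
    (hφ : DifferentiableAt ℝ φ (ψ η)) (hψ : DifferentiableAt ℝ ψ η) {J K : Matrix ι ι ℝ}
    (hJ : ∀ v, ofLp (fderiv ℝ φ (ψ η) v) = J *ᵥ ofLp v)
    (hK : ∀ v, ofLp (fderiv ℝ ψ η v) = K *ᵥ ofLp v) : J * K = 1 := by
  have hφψ' : φ ∘ ψ =ᶠ[𝓝 η] id := hφψ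
  have hid : (fderiv ℝ φ (ψ η)).comp (fderiv ℝ ψ η) = ContinuousLinearMap.id ℝ _ := by
    rw [← fderiv_comp η hφ hψ, hφψ'.fderiv_eq, fderiv_id]
  refine mulVec_injective (funext fun v => ?_)
  have hv := congrArg ofLp (ContinuousLinearMap.ext_iff.1 hid (toLp 2 v))
  rw [ContinuousLinearMap.comp_apply, hJ, hK] at hv
  simpa [mulVec_mulVec] using hv

theorem ofLp_gradient_comp {K : Matrix ι ι ℝ} (hK : ∀ v, ofLp (fderiv ℝ ψ η v) = K *ᵥ ofLp v)
    {f : EuclideanSpace ℝ ι → ℝ} (hf : DifferentiableAt ℝ f (ψ η))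
    (hψ : DifferentiableAt ℝ ψ η) :
    ofLp (gradient (f ∘ ψ) η) = Kᵀ *ᵥ ofLp (gradient f (ψ η)) := by
  refine dotProduct_eq _ _ fun u => ?_
  have h := inner_gradient_left (𝕜 := ℝ) (f := f ∘ ψ) (x := η) (y := toLp 2 u)
  rw [fderiv_comp η hf hψ, ContinuousLinearMap.comp_apply, ← inner_gradient_left] at h
  simp only [EuclideanSpace.inner_eq_star_dotProduct, star_trivial, hK] at h
  rw [dotProduct_comm, h, mulVec_transpose, dotProduct_comm, dotProduct_mulVec]

end Calculus

theorem fisherInfo_comp {α : Type*} [MeasurableSpace α] {μ : Measure α} {d : ℕ}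
    {p : EuclideanSpace ℝ (Fin d) → α → ℝ}
    {ψ : EuclideanSpace ℝ (Fin d) → EuclideanSpace ℝ (Fin d)} {η : EuclideanSpace ℝ (Fin d)}
    {K : Matrix (Fin d) (Fin d) ℝ} (hK : ∀ v, ofLp (fderiv ℝ ψ η v) = K *ᵥ ofLp v)
    (hψ : DifferentiableAt ℝ ψ η)
    (hdiff : ∀ᵐ x ∂μ, DifferentiableAt ℝ (fun θ => Real.log (p θ x)) (ψ η))
    (hint : ∀ i j, Integrable (fun x => score p (ψ η) x i * score p (ψ η) x j * p (ψ η) x) μ) :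
    fisherInfo μ (fun y => p (ψ y)) η = Kᵀ * fisherInfo μ p (ψ η) * K := by
  have hscore : ∀ᵐ x ∂μ,
      ofLp (score (fun y => p (ψ y)) η x) = Kᵀ *ᵥ ofLp (score p (ψ η) x) := by
    filter_upwards [hdiff] with x hx
    exact ofLp_gradient_comp hK hx hψ
  ext i j
  calc fisherInfo μ (fun y => p (ψ y)) η i j
      = ∫ x, (Kᵀ *ᵥ ofLp (score p (ψ η) x)) i * (Kᵀ *ᵥ ofLp (score p (ψ η) x)) j
          * p (ψ η) x ∂μ := by
        refine integral_congr_ae (hscore.mono fun x hx => ?_)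
        simp only [← hx]
    _ = (Kᵀ * fisherInfo μ p (ψ η) * K) i j := by
        rw [integral_mulVec_mul_mulVec_mul hint, transpose_transpose]
        rfl

theorem stmt_9_general {α : Type*} [MeasurableSpace α] (μ : Measure α) {d : ℕ}
    (p : EuclideanSpace ℝ (Fin d) → α → ℝ)
    (θ0 : EuclideanSpace ℝ (Fin d))
    (φ ψ : EuclideanSpace ℝ (Fin d) → EuclideanSpace ℝ (Fin d))
    (hψφ : ∀ᶠ θ in nhds θ0, ψ (φ θ) = θ)
    (hφψ : ∀ᶠ η in nhds (φ θ0), φ (ψ η) = η)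
    (hφdiff : DifferentiableAt ℝ φ θ0)
    (J : Matrix (Fin d) (Fin d) ℝ)
    (hJ : ∀ v : EuclideanSpace ℝ (Fin d),
      (fun i => fderiv ℝ φ θ0 v i) = J.mulVec (fun i => v i))
    (hψdiff : DifferentiableAt ℝ ψ (φ θ0))
    (hdiff : ∀ᵐ x ∂μ, DifferentiableAt ℝ (fun θ => Real.log (p θ x)) θ0)
    (hIint : ∀ i j, Integrable
      (fun x => score p θ0 x i * score p θ0 x j * p θ0 x) μ) :
    ∀ F : EuclideanSpace ℝ (Fin d) → ℝ, DifferentiableAt ℝ F θ0 →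
      (fisherInfo μ (fun η => p (ψ η)) (φ θ0))⁻¹.mulVec
          (fun i => gradient (F ∘ ψ) (φ θ0) i)
        = J.mulVec ((fisherInfo μ p θ0)⁻¹.mulVec (fun i => gradient F θ0 i)) := by
  intro F hF
  have hθ : ψ (φ θ0) = θ0 := hψφ.self_of_nhds
  obtain ⟨K, hK⟩ := exists_mulVec_eq_ofLp_apply (fderiv ℝ ψ (φ θ0))
  have hJK : J * K = 1 :=
    mul_eq_one_of_comp_eventuallyEq_id hφψ (by rwa [hθ]) hψdiff (by rwa [hθ]) hK
  have hI := fisherInfo_comp hK hψdiff (by rwa [hθ]) (by rwa [hθ])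
  have hgrad := ofLp_gradient_comp hK (f := F) (by rwa [hθ]) hψdiff
  rw [hθ] at hI hgrad
  rw [hI, hgrad]
  exact inv_transpose_mul_mul_mulVec_transpose_mulVec hJK _ _

/-- Natural gradients transform as tangent vectors under a smooth bijective
reparameterization: `Ĩ(η₀)⁻¹ ∇(F∘ψ)(η₀) = J (I(θ₀)⁻¹ ∇F(θ₀))`. -/
theorem stmt_9 {α : Type*} [MeasurableSpace α] (μ : Measure α) {d : ℕ} (hd : 1 ≤ d)
    (p : EuclideanSpace ℝ (Fin d) → α → ℝ)
    (hppos : ∀ θ, ∀ᵐ x ∂μ, 0 < p θ x)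
    (hpmeas : ∀ θ, Measurable (p θ))
    (hpint : ∀ θ, ∫ x, p θ x ∂μ = 1)
    (θ0 : EuclideanSpace ℝ (Fin d))
    (φ ψ : EuclideanSpace ℝ (Fin d) → EuclideanSpace ℝ (Fin d))
    (hψφ : ∀ᶠ θ in nhds θ0, ψ (φ θ) = θ)
    (hφψ : ∀ᶠ η in nhds (φ θ0), φ (ψ η) = η)
    (hφdiff : DifferentiableAt ℝ φ θ0)
    (J : Matrix (Fin d) (Fin d) ℝ)
    (hJ : ∀ v : EuclideanSpace ℝ (Fin d),
      (fun i => fderiv ℝ φ θ0 v i) = J.mulVec (fun i => v i))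
    (hJinv : IsUnit J)
    (hψdiff : DifferentiableAt ℝ ψ (φ θ0))
    (hdiff : ∀ᵐ x ∂μ, DifferentiableAt ℝ (fun θ => Real.log (p θ x)) θ0)
    (hIint : ∀ i j, Integrable
      (fun x => score p θ0 x i * score p θ0 x j * p θ0 x) μ)
    (hI'int : ∀ i j, Integrable
      (fun x => score (fun η => p (ψ η)) (φ θ0) x i *
        score (fun η => p (ψ η)) (φ θ0) x j * p (ψ (φ θ0)) x) μ)
    (hIinv : IsUnit (fisherInfo μ p θ0)) :
    ∀ F : EuclideanSpace ℝ (Fin d) → ℝ, DifferentiableAt ℝ F θ0 →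
      (fisherInfo μ (fun η => p (ψ η)) (φ θ0))⁻¹.mulVec
          (fun i => gradient (F ∘ ψ) (φ θ0) i)
        = J.mulVec ((fisherInfo μ p θ0)⁻¹.mulVec (fun i => gradient F θ0 i)) :=
  stmt_9_general μ p θ0 φ ψ hψφ hφψ hφdiff J hJ hψdiff hdiff hIint
end

section
/- Let n, N ≥ 1; let ŵ : Fin N → ℝ satisfy Σᵢ ŵ i = 1; let x : Fin N → (Fin n → ℝ) be samples; let mᵗ, s_m, s_c ∈ Fin n → ℝ; let η_m, η_c, λ₀ ≥ 0 be reals; set z_m := η_m + λ₀ + 1, z_c := η_c + λ₀ + 1, d_w := Σᵢ (ŵ i) • (x i − mᵗ), β := z_m⁻¹ • (d_w + λ₀ • s_m), m' := mᵗ + β and dᵢ := x i − mᵗ. Let Cᵗ and Q be n × n real matrices. Then C' := z_c⁻¹ • [ Σᵢ (ŵ i) • ((dᵢ − β) ⬝ (dᵢ − β)ᵀ) + η_c • (Cᵗ + β ⬝ βᵀ) + λ₀ • ((s_c − β) ⬝ (s_c − β)ᵀ) + Q ] is the unique n × n matrix satisfying the stationarity equation Σᵢ (ŵ i) • ((x i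 − m') ⬝ (x i − m')ᵀ − C') + η_c • ((mᵗ − m') ⬝ (mᵗ − m')ᵀ + Cᵗ − C') + λ₀ • ((s_c + mᵗ − m') ⬝ (s_c + mᵗ − m')ᵀ − C') + Q = 0, where u ⬝ vᵀ denotes the rank-one matrix with entries u i · v j. -/
open Matrix

lemma vecMulVec_neg_neg {n : ℕ} (u v : Fin n → ℝ) :
    Matrix.vecMulVec (-u) (-v) = Matrix.vecMulVec u v := by
  ext i j; simp [Matrix.vecMulVec]

/-- The covariance update of SynCMA: the displayed `C'` is the unique matrix
satisfying the covariance stationarity equation of the natural Lagrange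
condition, where `u ⬝ vᵀ` is `Matrix.vecMulVec u v`. -/
theorem stmt_13 {n N : ℕ} (hn : 1 ≤ n) (hN : 1 ≤ N)
    (w : Fin N → ℝ) (hw : ∑ i, w i = 1)
    (x : Fin N → Fin n → ℝ) (mt s_m s_c : Fin n → ℝ)
    (η_m η_c l₀ : ℝ) (hηm : 0 ≤ η_m) (hηc : 0 ≤ η_c) (hl : 0 ≤ l₀)
    (z_m z_c : ℝ) (hzm : z_m = η_m + l₀ + 1) (hzc : z_c = η_c + l₀ + 1)
    (d_w : Fin n → ℝ) (hdw : d_w = ∑ i, w i • (x i - mt))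
    (β : Fin n → ℝ) (hβ : β = z_m⁻¹ • (d_w + l₀ • s_m))
    (m' : Fin n → ℝ) (hm' : m' = mt + β)
    (d : Fin N → Fin n → ℝ) (hd : ∀ i, d i = x i - mt)
    (Ct Q : Matrix (Fin n) (Fin n) ℝ) :
    ∀ C' : Matrix (Fin n) (Fin n) ℝ,
      ((∑ i, w i • (Matrix.vecMulVec (x i - m') (x i - m') - C'))
        + η_c • (Matrix.vecMulVec (mt - m') (mt - m') + Ct - C')
        + l₀ • (Matrix.vecMulVec (s_c + mt - m') (s_c + mt - m') - C')
        + Q = 0)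
      ↔ C' = z_c⁻¹ • ((∑ i, w i • Matrix.vecMulVec (d i - β) (d i - β))
          + η_c • (Ct + Matrix.vecMulVec β β)
          + l₀ • Matrix.vecMulVec (s_c - β) (s_c - β) + Q) := by
  intro C'
  have hzc0 : z_c ≠ 0 := by
    rw [hzc]; positivity
  set S : Matrix (Fin n) (Fin n) ℝ :=
    (∑ i, w i • Matrix.vecMulVec (d i - β) (d i - β))
      + η_c • (Ct + Matrix.vecMulVec β β)
      + l₀ • Matrix.vecMulVec (s_c - β) (s_c - β) + Q with hS
  have h1 : ∀ i, x i - m' = d i - β := by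
    intro i; rw [hd, hm']; abel
  have h2 : mt - m' = -β := by rw [hm']; abel
  have h3 : s_c + mt - m' = s_c - β := by rw [hm']; abel
  have key : ((∑ i, w i • (Matrix.vecMulVec (x i - m') (x i - m') - C'))
        + η_c • (Matrix.vecMulVec (mt - m') (mt - m') + Ct - C')
        + l₀ • (Matrix.vecMulVec (s_c + mt - m') (s_c + mt - m') - C')
        + Q) = S - z_c • C' := by
    simp only [h2, h3, vecMulVec_neg_neg]
    simp only [fun i => h1 i]
    have hsum : (∑ i, w i • (Matrix.vecMulVec (d i - β) (d i - β) - C'))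
        = (∑ i, w i • Matrix.vecMulVec (d i - β) (d i - β)) - C' := by
      simp only [smul_sub, Finset.sum_sub_distrib, ← Finset.sum_smul, hw, one_smul]
    rw [hsum, hS, hzc]
    module
  rw [key, sub_eq_zero, eq_comm]
  constructor
  · intro h; rw [← h, inv_smul_smul₀ hzc0]
  · intro h; rw [h, smul_inv_smul₀ hzc0]
end

section
/- Let n, N ≥ 1; let ŵ : Fin N → ℝ satisfy Σᵢ ŵ i = 1; let x : Fin N → (Fin n → ℝ) be samples; let mᵗ, s_c ∈ Fin n → ℝ; let η_m, η_c, λ₀ ≥ 0 be reals; set z_m := η_m + 1, z_c := η_c + λ₀ + 1, dᵢ := x i − mᵗ, d_w := Σᵢ (ŵ i) • dᵢ, D_w := Σᵢ (ŵ i) • (dᵢ ⬝ dᵢᵀ), β := z_m⁻¹ • d_w, and let Cᵗ be an n × n real matrix. For vectors u, v write u ∘ v := u ⬝ vᵀ + v ⬝ uᵀ. Then the unique pair (m', C') satisfying the system (a) Σᵢ (ŵ i) • (x i − m') + η_m • (mᵗ − m') = 0 and (b) Σᵢ (ŵ i) • ((x i − m') ⬝ (x i − m')ᵀ − C') + η_c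 • ((mᵗ − m') ⬝ (mᵗ − m')ᵀ + Cᵗ − C') + λ₀ • ((s_c + mᵗ − m') ⬝ (s_c + mᵗ − m')ᵀ − C') = 0 is given by m' = mᵗ + z_m⁻¹ • d_w and C' = (η_c/z_c) • Cᵗ + (1/z_c) • D_w + (λ₀/z_c) • (s_c ⬝ s_cᵀ) − (λ₀/(z_c·z_m)) • (d_w ∘ s_c) − (1/(z_c·z_m))·(2 − z_c/z_m) • (d_w ⬝ d_wᵀ). -/
/-!
Since the weights sum to one, both stationarity equations are affine in the unknown: the mean
equation reads `d_w + z_m (mᵗ - m') = 0`, and the covariance equation reads `M(m') - z_c C' = 0`,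
where `M(m')` collects the weighted scatter of the samples about `m'` and the `η_c`, `λ₀` terms.
With `β = z_m⁻¹ d_w`, the scatter about `m' = mᵗ + β` is `D_w - d_w βᵀ - β d_wᵀ + β βᵀ`; expanding
`z_c⁻¹ M(mᵗ + β)` and collecting the coefficients of `Cᵗ, D_w, s_c s_cᵀ, d_w ∘ s_c, d_w d_wᵀ`
gives the stated closed form.
-/

open Matrix

section
variable {ι m R : Type*} [CommSemiring R]

theorem Matrix.sum_smul_vecMulVec (s : Finset ι) (w : ι → R) (u : ι → m → R) (v : m → R) :
    vecMulVec (∑ i ∈ s, w i • u i) v = ∑ i ∈ s, w i • vecMulVec (u i) v := by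
  ext a b
  simp [vecMulVec_apply, Matrix.sum_apply, Finset.sum_mul, mul_assoc]

theorem Matrix.vecMulVec_sum_smul (s : Finset ι) (w : ι → R) (u : m → R) (v : ι → m → R) :
    vecMulVec u (∑ i ∈ s, w i • v i) = ∑ i ∈ s, w i • vecMulVec u (v i) := by
  ext a b
  simp [vecMulVec_apply, Matrix.sum_apply, Finset.mul_sum, mul_left_comm]

end

theorem sum_smul_const_of_sum_eq_one {ι R E : Type*} [Fintype ι] [Semiring R] [AddCommMonoid E]
    [Module R E] {w : ι → R} (hw : ∑ i, w i = 1) (c : E) : ∑ i, w i • c = c := by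
  rw [← Finset.sum_smul, hw, one_smul]

theorem Matrix.sum_smul_vecMulVec_sub_sub {ι m R : Type*} [Fintype ι] [CommRing R] {w : ι → R}
    (hw : ∑ i, w i = 1) (u : ι → m → R) (b : m → R) :
    ∑ i, w i • vecMulVec (u i - b) (u i - b) =
      ∑ i, w i • vecMulVec (u i) (u i) - vecMulVec (∑ i, w i • u i) b
        - vecMulVec b (∑ i, w i • u i) + vecMulVec b b := by
  rw [sum_smul_vecMulVec, vecMulVec_sum_smul, ← sum_smul_const_of_sum_eq_one hw (vecMulVec b b),
    ← Finset.sum_sub_distrib, ← Finset.sum_sub_distrib, ← Finset.sum_add_distrib]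
  refine Finset.sum_congr rfl fun i _ => ?_
  simp only [sub_vecMulVec, vecMulVec_sub]
  module

section
variable {ι 𝕜 E : Type*} [Fintype ι] [Field 𝕜] [AddCommGroup E] [Module 𝕜 E]
  {w : ι → 𝕜}

theorem sum_smul_sub_add_smul_sub_eq_zero_iff (hw : ∑ i, w i = 1) {η : 𝕜} (hη : η + 1 ≠ 0)
    (x : ι → E) (a b : E) :
    ∑ i, w i • (x i - b) + η • (a - b) = 0 ↔ b = a + (η + 1)⁻¹ • ∑ i, w i • (x i - a) := by
  have hsplit : ∑ i, w i • (x i - b) = ∑ i, w i • (x i - a) + (a - b) := by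
    rw [← sum_smul_const_of_sum_eq_one hw (a - b), ← Finset.sum_add_distrib]
    simp only [← smul_add, sub_add_sub_cancel]
  rw [hsplit, ← sub_eq_iff_eq_add', eq_inv_smul_iff₀ hη]
  constructor <;> intro h <;> linear_combination (norm := module) -h

theorem sum_smul_sub_add_smul_sub_add_smul_sub_eq_zero_iff (hw : ∑ i, w i = 1) {η μ : 𝕜}
    (hz : η + μ + 1 ≠ 0) (A : ι → E) (B D C : E) :
    ∑ i, w i • (A i - C) + η • (B - C) + μ • (D - C) = 0 ↔
      C = (η + μ + 1)⁻¹ • (∑ i, w i • A i + η • B + μ • D) := by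
  have hsplit : ∑ i, w i • (A i - C) = ∑ i, w i • A i - C := by
    simp only [smul_sub, Finset.sum_sub_distrib, sum_smul_const_of_sum_eq_one hw]
  rw [hsplit, eq_inv_smul_iff₀ hz]
  constructor <;> intro h <;> linear_combination (norm := module) -h

end

theorem stmt_14_general {n N : ℕ}
    (w : Fin N → ℝ) (hw : ∑ i, w i = 1)
    (x : Fin N → Fin n → ℝ) (mt s_c : Fin n → ℝ)
    (η_m η_c l₀ : ℝ) (hηm : 0 ≤ η_m) (hηc : 0 ≤ η_c) (hl : 0 ≤ l₀)
    (z_m z_c : ℝ) (hzm : z_m = η_m + 1) (hzc : z_c = η_c + l₀ + 1)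
    (d : Fin N → Fin n → ℝ) (hd : ∀ i, d i = x i - mt)
    (d_w : Fin n → ℝ) (hdw : d_w = ∑ i, w i • d i)
    (D_w : Matrix (Fin n) (Fin n) ℝ)
    (hDw : D_w = ∑ i, w i • Matrix.vecMulVec (d i) (d i))
    (Ct : Matrix (Fin n) (Fin n) ℝ) :
    ∀ (m' : Fin n → ℝ) (C' : Matrix (Fin n) (Fin n) ℝ),
      (((∑ i, w i • (x i - m')) + η_m • (mt - m') = 0) ∧
        ((∑ i, w i • (Matrix.vecMulVec (x i - m') (x i - m') - C'))
          + η_c • (Matrix.vecMulVec (mt - m') (mt - m') + Ct - C')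
          + l₀ • (Matrix.vecMulVec (s_c + mt - m') (s_c + mt - m') - C') = 0))
      ↔ (m' = mt + z_m⁻¹ • d_w ∧
          C' = (η_c / z_c) • Ct + (1 / z_c) • D_w
            + (l₀ / z_c) • Matrix.vecMulVec s_c s_c
            - (l₀ / (z_c * z_m)) •
                (Matrix.vecMulVec d_w s_c + Matrix.vecMulVec s_c d_w)
            - ((1 / (z_c * z_m)) * (2 - z_c / z_m)) • Matrix.vecMulVec d_w d_w) := by
  have hzm0 : z_m ≠ 0 := by rw [hzm]; positivity
  have hzc0 : z_c ≠ 0 := by rw [hzc]; positivity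
  intro m' C'
  rw [sum_smul_sub_add_smul_sub_eq_zero_iff hw (hzm ▸ hzm0), ← hzm,
    sum_smul_sub_add_smul_sub_add_smul_sub_eq_zero_iff hw (hzc ▸ hzc0), ← hzc]
  simp only [← hd, ← hdw]
  refine and_congr_right fun hm' => ?_
  have hscatter : ∑ i, w i • vecMulVec (x i - m') (x i - m') =
      D_w - vecMulVec d_w (z_m⁻¹ • d_w) - vecMulVec (z_m⁻¹ • d_w) d_w
        + vecMulVec (z_m⁻¹ • d_w) (z_m⁻¹ • d_w) := by
    simp only [hm', sub_add_eq_sub_sub, ← hd]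
    rw [sum_smul_vecMulVec_sub_sub hw, ← hDw, ← hdw]
  rw [hscatter, hm', sub_add_cancel_left,
    show s_c + mt - (mt + z_m⁻¹ • d_w) = s_c - z_m⁻¹ • d_w by abel]
  refine Eq.congr_right ?_
  simp only [vecMulVec_sub, sub_vecMulVec, neg_vecMulVec, vecMulVec_neg, smul_vecMulVec,
    vecMulVec_smul]
  subst hzc
  match_scalars <;> field_simp
  ring

/-- Proposition 4 (connection of SynCMA to CMA-ES): the unique solution of the
stationarity system with the historical term dropped from the mean equation and
kept partially in the covariance equation is `m' = mᵗ + z_m⁻¹ d_w` and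
`C' = (η_c/z_c) Cᵗ + (1/z_c) D_w + (λ₀/z_c) s_c s_cᵀ − (λ₀/(z_c z_m)) (d_w ∘ s_c)
− (1/(z_c z_m))(2 − z_c/z_m) d_w d_wᵀ`, where `u ∘ v = u vᵀ + v uᵀ`. -/
theorem stmt_14 {n N : ℕ} (hn : 1 ≤ n) (hN : 1 ≤ N)
    (w : Fin N → ℝ) (hw : ∑ i, w i = 1)
    (x : Fin N → Fin n → ℝ) (mt s_c : Fin n → ℝ)
    (η_m η_c l₀ : ℝ) (hηm : 0 ≤ η_m) (hηc : 0 ≤ η_c) (hl : 0 ≤ l₀)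
    (z_m z_c : ℝ) (hzm : z_m = η_m + 1) (hzc : z_c = η_c + l₀ + 1)
    (d : Fin N → Fin n → ℝ) (hd : ∀ i, d i = x i - mt)
    (d_w : Fin n → ℝ) (hdw : d_w = ∑ i, w i • d i)
    (D_w : Matrix (Fin n) (Fin n) ℝ)
    (hDw : D_w = ∑ i, w i • Matrix.vecMulVec (d i) (d i))
    (β : Fin n → ℝ) (hβ : β = z_m⁻¹ • d_w)
    (Ct : Matrix (Fin n) (Fin n) ℝ) :
    ∀ (m' : Fin n → ℝ) (C' : Matrix (Fin n) (Fin n) ℝ),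
      (((∑ i, w i • (x i - m')) + η_m • (mt - m') = 0) ∧
        ((∑ i, w i • (Matrix.vecMulVec (x i - m') (x i - m') - C'))
          + η_c • (Matrix.vecMulVec (mt - m') (mt - m') + Ct - C')
          + l₀ • (Matrix.vecMulVec (s_c + mt - m') (s_c + mt - m') - C') = 0))
      ↔ (m' = mt + z_m⁻¹ • d_w ∧
          C' = (η_c / z_c) • Ct + (1 / z_c) • D_w
            + (l₀ / z_c) • Matrix.vecMulVec s_c s_c
            - (l₀ / (z_c * z_m)) •
                (Matrix.vecMulVec d_w s_c + Matrix.vecMulVec s_c d_w)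
            - ((1 / (z_c * z_m)) * (2 - z_c / z_m)) • Matrix.vecMulVec d_w d_w) :=
  stmt_14_general w hw x mt s_c η_m η_c l₀ hηm hηc hl z_m z_c hzm hzc d hd d_w hdw D_w hDw Ct
end
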